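/- arXiv:2408.14392 — 5 statements merged into one kernel-verified Lean document; each statement's English description precedes it below -/
import Mathlib

section
/- Let A and B be compact bounded linear operators on C(S²) such that I − A is injective (so that, by the Riesz theory, (I − A)⁻¹ exists as a bounded linear operator on C(S²)), and suppose that the operator norm satisfies ‖(I − A)⁻¹ ∘ (B − A) ∘ B‖ < 1. Then I − B is bijective, its inverse (I − B)⁻¹ : C(S²) → C(S²) is a bounded linear operator, and ‖(I − B)⁻¹‖ ≤ (1 + ‖(I − A)⁻¹ ∘ B‖) / (1 − ‖(I − A)⁻¹ ∘ (B − A) ∘ B‖). -/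
/-!
Since `R` is a left inverse of `1 - A`, the operator `L = 1 + R B` satisfies
`L (1 - B) = 1 - R (B - A) B =: 1 - C`, and `1 - C` is invertible by the Neumann series because
`‖C‖ < 1`. Thus `1 - B` has a left inverse, so it is injective, and the Fredholm alternative for
the compact operator `B` makes it invertible. Its inverse is `(1 - C)⁻¹ L`, whose norm is at most
`‖L‖ / (1 - ‖C‖) ≤ (1 + ‖R B‖) / (1 - ‖C‖)`.
-/

theorem IsCompactOperator.isUnit_one_sub_of_injective {𝕜 X : Type*} [NontriviallyNormedField 𝕜]
    [NormedAddCommGroup X] [NormedSpace 𝕜 X] [CompleteSpace X] {K : X →L[𝕜] X}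
    (hK : IsCompactOperator K) (hinj : Function.Injective ⇑(1 - K)) : IsUnit (1 - K) := by
  rcases hK.hasEigenvalue_or_mem_resolventSet one_ne_zero with hev | hres
  · obtain ⟨x, hx, hx0⟩ := hev.exists_hasEigenvector
    rw [Module.End.mem_eigenspace_iff, one_smul, ContinuousLinearMap.coe_coe] at hx
    exact absurd (hinj (by simp [hx])) hx0
  · simpa [spectrum.mem_resolventSet_iff] using hres

theorem one_add_mul_mul_one_sub_eq {R : Type*} [Ring R] {r a : R}
    (h : r * (1 - a) = 1) (b : R) : (1 + r * b) * (1 - b) = 1 - r * (b - a) * b := by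
  have hrb : r * b - r * a * b = b := by
    simpa [mul_sub, sub_mul, mul_assoc] using congrArg (· * b) h
  calc (1 + r * b) * (1 - b) = 1 - b + r * b - r * b * b := by noncomm_ring
    _ = 1 - (r * b - r * a * b) + r * b - r * b * b := by rw [hrb]
    _ = 1 - r * (b - a) * b := by noncomm_ring

theorem norm_inv_oneSub_mul_le {R : Type*} [NormedRing R] [CompleteSpace R] {c : R}
    (hc : ‖c‖ < 1) (y : R) : ‖↑(Units.oneSub c hc)⁻¹ * y‖ ≤ ‖y‖ / (1 - ‖c‖) := by
  have hle : ∀ n, ‖c ^ n * y‖ ≤ ‖y‖ * ‖c‖ ^ n := fun n ↦ by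
    induction n with
    | zero => simp
    | succ n ih =>
      calc ‖c ^ (n + 1) * y‖ = ‖c * (c ^ n * y)‖ := by rw [pow_succ', mul_assoc]
        _ ≤ ‖c‖ * (‖y‖ * ‖c‖ ^ n) := (norm_mul_le _ _).trans (by gcongr)
        _ = ‖y‖ * ‖c‖ ^ (n + 1) := by ring
  have hgeom := (hasSum_geometric_of_lt_one (norm_nonneg c) hc).mul_left ‖y‖
  calc ‖↑(Units.oneSub c hc)⁻¹ * y‖ = ‖∑' n, c ^ n * y‖ :=
        by rw [(summable_geometric_of_norm_lt_one hc).tsum_mul_right]; rfl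
    _ ≤ ‖y‖ * (1 - ‖c‖)⁻¹ := tsum_of_norm_bounded hgeom hle
    _ = ‖y‖ / (1 - ‖c‖) := rfl

theorem Units.norm_inv_le_of_mul_eq_one_sub {R : Type*} [NormedRing R] [CompleteSpace R]
    (u : Rˣ) {y c : R} (hc : ‖c‖ < 1) (h : y * u = 1 - c) :
    ‖(↑u⁻¹ : R)‖ ≤ ‖y‖ / (1 - ‖c‖) := by
  have : (↑u⁻¹ : R) = ↑(Units.oneSub c hc)⁻¹ * y := by
    rw [Units.eq_inv_mul_iff_mul_eq, Units.val_oneSub, ← h, mul_assoc, Units.mul_inv, mul_one]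
  exact this ▸ norm_inv_oneSub_mul_le hc y

noncomputable abbrev S2 : Type := Metric.sphere (0 : EuclideanSpace ℝ (Fin 3)) 1

theorem stmt_0_general
    (A B : C(S2, ℝ) →L[ℝ] C(S2, ℝ))
    (hB : IsCompactOperator (⇑B))
    (R : C(S2, ℝ) →L[ℝ] C(S2, ℝ))
    (hR₁ : R * (1 - A) = 1)
    (hsmall : ‖R * (B - A) * B‖ < 1) :
    Function.Bijective (⇑(1 - B)) ∧
      ∃ S : C(S2, ℝ) →L[ℝ] C(S2, ℝ),
        S * (1 - B) = 1 ∧ (1 - B) * S = 1 ∧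
          ‖S‖ ≤ (1 + ‖R * B‖) / (1 - ‖R * (B - A) * B‖) := by
  have hL : (1 + R * B) * (1 - B) = 1 - R * (B - A) * B := one_add_mul_mul_one_sub_eq hR₁ B
  have hinj : Function.Injective ⇑(1 - B) := by
    have hC : IsUnit (1 - R * (B - A) * B) :=
      isUnit_one_sub_of_norm_lt_one (x := R * (B - A) * B) hsmall
    rw [← hL, ContinuousLinearMap.isUnit_iff_bijective] at hC
    exact Function.Injective.of_comp (f := ⇑(1 + R * B)) hC.injective
  obtain ⟨u, hu⟩ := hB.isUnit_one_sub_of_injective hinj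
  refine ⟨ContinuousLinearMap.isUnit_iff_bijective.mp ⟨u, hu⟩, ↑u⁻¹,
    by rw [← hu, Units.inv_mul], by rw [← hu, Units.mul_inv], ?_⟩
  calc ‖(↑u⁻¹ : C(S2, ℝ) →L[ℝ] C(S2, ℝ))‖ ≤ ‖1 + R * B‖ / (1 - ‖R * (B - A) * B‖) :=
        u.norm_inv_le_of_mul_eq_one_sub hsmall (hu ▸ hL)
    _ ≤ (1 + ‖R * B‖) / (1 - ‖R * (B - A) * B‖) := by
        gcongr
        exact (norm_add_le (1 : C(S2, ℝ) →L[ℝ] C(S2, ℝ)) (R * B)).trans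
          (by gcongr; exact ContinuousLinearMap.norm_id_le)

/-- Let `A` and `B` be compact bounded linear operators on `C(S²)` such that
`I − A` is injective, so that (by the Riesz theory) `I − A` has a bounded linear inverse `R`,
and suppose `‖(I − A)⁻¹ ∘ (B − A) ∘ B‖ < 1`.  Then `I − B` is bijective, its inverse is a
bounded linear operator `S`, and
`‖(I − B)⁻¹‖ ≤ (1 + ‖(I − A)⁻¹ ∘ B‖) / (1 − ‖(I − A)⁻¹ ∘ (B − A) ∘ B‖)`. -/
theorem stmt_0
    (A B : C(S2, ℝ) →L[ℝ] C(S2, ℝ))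
    (hA : IsCompactOperator (⇑A)) (hB : IsCompactOperator (⇑B))
    (hinj : Function.Injective (⇑(1 - A)))
    (R : C(S2, ℝ) →L[ℝ] C(S2, ℝ))
    (hR₁ : R * (1 - A) = 1) (hR₂ : (1 - A) * R = 1)
    (hsmall : ‖R * (B - A) * B‖ < 1) :
    Function.Bijective (⇑(1 - B)) ∧
      ∃ S : C(S2, ℝ) →L[ℝ] C(S2, ℝ),
        S * (1 - B) = 1 ∧ (1 - B) * S = 1 ∧
          ‖S‖ ≤ (1 + ‖R * B‖) / (1 - ‖R * (B - A) * B‖) :=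
  stmt_0_general A B hB R hR₁ hsmall
end

section
/- Let A and B be compact bounded linear operators on C(S²) such that I − A is injective (so that (I − A)⁻¹ exists as a bounded linear operator), and suppose ‖(I − A)⁻¹ ∘ (B − A) ∘ B‖ < 1. If φ, φ_B, f ∈ C(S²) satisfy φ − Aφ = f and φ_B − Bφ_B = f, then ‖φ_B − φ‖_∞ ≤ [(1 + ‖(I − A)⁻¹ ∘ B‖) / (1 − ‖(I − A)⁻¹ ∘ (B − A) ∘ B‖)] · ‖(B − A)φ‖_∞. -/
/-- Let `A` and `B` be compact bounded linear operators on `C(S²)` such that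
`I − A` is injective, so that (by the Riesz theory) `I − A` has a bounded linear inverse `R`,
and suppose `‖(I − A)⁻¹ ∘ (B − A) ∘ B‖ < 1`.  If `φ, φ_B, f ∈ C(S²)` satisfy
`φ − Aφ = f` and `φ_B − Bφ_B = f`, then
`‖φ_B − φ‖_∞ ≤ [(1 + ‖(I − A)⁻¹ ∘ B‖) / (1 − ‖(I − A)⁻¹ ∘ (B − A) ∘ B‖)] · ‖(B − A)φ‖_∞`. -/
theorem stmt_1
    (A B : C(S2, ℝ) →L[ℝ] C(S2, ℝ))
    (hA : IsCompactOperator (⇑A)) (hB : IsCompactOperator (⇑B))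
    (hinj : Function.Injective (⇑(1 - A)))
    (R : C(S2, ℝ) →L[ℝ] C(S2, ℝ))
    (hR₁ : R * (1 - A) = 1) (hR₂ : (1 - A) * R = 1)
    (hsmall : ‖R * (B - A) * B‖ < 1)
    (φ φB f : C(S2, ℝ))
    (hφ : φ - A φ = f) (hφB : φB - B φB = f) :
    ‖φB - φ‖ ≤ (1 + ‖R * B‖) / (1 - ‖R * (B - A) * B‖) * ‖(B - A) φ‖ := by
  set e : C(S2, ℝ) := φB - φ with he
  set g : C(S2, ℝ) := (B - A) φ with hgdef
  have hg : g = B φ - A φ := by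
    simp [hgdef, ContinuousLinearMap.sub_apply]
  have h1A : ∀ x : C(S2, ℝ), R ((1 - A) x) = x := by
    intro x
    have : (R * (1 - A)) x = (1 : C(S2, ℝ) →L[ℝ] C(S2, ℝ)) x := by rw [hR₁]
    simpa [ContinuousLinearMap.mul_apply] using this
  -- e = B e + g
  have heB : e = B e + g := by
    have h1 : φB - B φB = φ - A φ := by rw [hφ, hφB]
    have h2 : B e = B φB - B φ := by
      rw [he, map_sub]
    rw [he, hg, h2]
    linear_combination h1
  have hBe : B e = B (B e) + B g := by
    have := congrArg (⇑B) heB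
    rwa [map_add] at this
  have hAe : A e = A (B e) + A g := by
    have := congrArg (⇑A) heB
    rwa [map_add] at this
  -- (1 - A) e = (B - A) (B e) + (B - A) g + g
  have h2 : (1 - A) e = (B - A) (B e) + ((B - A) g + g) := by
    simp only [ContinuousLinearMap.sub_apply, ContinuousLinearMap.one_apply]
    linear_combination heB + hBe - hAe
  have h3 : R g - R (A g) = g := by
    have := h1A g
    rw [ContinuousLinearMap.sub_apply, ContinuousLinearMap.one_apply, map_sub] at this
    exact this
  have hkey : e = (R * (B - A) * B) e + ((R * B) g + g) := by
    calc e = R ((1 - A) e) := (h1A e).symm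
    _ = R ((B - A) (B e)) + (R ((B - A) g) + R g) := by rw [h2, map_add, map_add]
    _ = (R * (B - A) * B) e + ((R * B) g + g) := by
        simp only [ContinuousLinearMap.mul_apply, ContinuousLinearMap.sub_apply, map_sub]
        linear_combination h3
  have hbound : ‖e‖ ≤ ‖R * (B - A) * B‖ * ‖e‖ + (‖R * B‖ * ‖g‖ + ‖g‖) := by
    calc ‖e‖ = ‖(R * (B - A) * B) e + ((R * B) g + g)‖ := by rw [← hkey]
    _ ≤ ‖(R * (B - A) * B) e‖ + ‖(R * B) g + g‖ := norm_add_le _ _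
    _ ≤ ‖(R * (B - A) * B) e‖ + (‖(R * B) g‖ + ‖g‖) := by
        gcongr; exact norm_add_le _ _
    _ ≤ ‖R * (B - A) * B‖ * ‖e‖ + (‖R * B‖ * ‖g‖ + ‖g‖) := by
        gcongr
        · exact (R * (B - A) * B).le_opNorm e
        · exact (R * B).le_opNorm g
  have hpos : 0 < 1 - ‖R * (B - A) * B‖ := by linarith
  rw [div_mul_eq_mul_div, le_div_iff₀ hpos]
  nlinarith [norm_nonneg e, norm_nonneg g, hbound]
end

section
/- Let X be a real Banach space, let T be a compact bounded linear operator on X, and suppose there exist bounded linear operators B and S on X such that B ∘ (I − T) = I − S and ‖S‖ < 1 in operator norm. Then I − T is bijective, its inverse is a bounded linear operator, and (I − T)⁻¹ = (I − S)⁻¹ ∘ B. -/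
/-!
Composing `B` with the Neumann-series inverse of `1 - S` gives a bounded left inverse of `1 - T`,
so `1 - T` is injective: `1` is not an eigenvalue of the compact operator `T`. By the Fredholm
alternative `1` then lies in the resolvent set of `T`, so `1 - T` is invertible, and its inverse
must coincide with the left inverse already found.
-/

open Module End

namespace IsCompactOperator

variable {𝕜 X : Type*} [NontriviallyNormedField 𝕜] [NormedAddCommGroup X] [NormedSpace 𝕜 X]
  [CompleteSpace X] {T : X →L[𝕜] X}

theorem isUnit_one_sub_of_injective_s3 (hT : IsCompactOperator T)
    (hinj : Function.Injective ⇑(1 - T)) : IsUnit (1 - T) := by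
  have hnot : ¬ HasEigenvalue (T : End 𝕜 X) 1 := fun h => by
    obtain ⟨v, hv⟩ := h.exists_hasEigenvector
    refine hv.2 (hinj ?_)
    simpa [sub_eq_zero] using hv.apply_eq_smul.symm
  simpa [spectrum.mem_resolventSet_iff] using
    (hT.hasEigenvalue_or_mem_resolventSet one_ne_zero).resolve_left hnot

end IsCompactOperator

theorem mul_eq_one_of_isUnit_of_mul_eq_one {M : Type*} [Monoid M] {a b : M} (ha : IsUnit a)
    (hba : b * a = 1) : a * b = 1 := by
  obtain ⟨u, rfl⟩ := ha
  rw [← Units.inv_eq_of_mul_eq_one_left hba, Units.mul_inv]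

/-- Let `X` be a real Banach space, let `T` be a compact bounded linear
operator on `X`, and suppose there exist bounded linear operators `B` and `S` on `X` such that
`B ∘ (I − T) = I − S` and `‖S‖ < 1`.  Then `I − T` is bijective, its inverse is a bounded
linear operator `T'`, and `T' = (I − S)⁻¹ ∘ B`, where `(I − S)⁻¹` is the inverse of the unit
`1 - S` (given by the Neumann series, since `‖S‖ < 1`). -/
theorem stmt_3
    {X : Type*} [NormedAddCommGroup X] [NormedSpace ℝ X] [CompleteSpace X]
    (T : X →L[ℝ] X) (hT : IsCompactOperator (⇑T))
    (B S : X →L[ℝ] X) (hBS : B * (1 - T) = 1 - S) (hS : ‖S‖ < 1) :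
    Function.Bijective (⇑(1 - T)) ∧
      ∃ T' : X →L[ℝ] X,
        T' * (1 - T) = 1 ∧ (1 - T) * T' = 1 ∧
          T' = (↑(Units.oneSub S hS)⁻¹ : X →L[ℝ] X) * B := by
  set L : X →L[ℝ] X := (↑(Units.oneSub S hS)⁻¹ : X →L[ℝ] X) * B
  have hleft : L * (1 - T) = 1 := by
    rw [mul_assoc, hBS]
    exact (Units.oneSub S hS).inv_mul
  have hinj : Function.Injective ⇑(1 - T) :=
    Function.LeftInverse.injective (g := L) fun x => by rw [← mul_apply_eq_comp, hleft]; rfl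
  have hunit : IsUnit (1 - T) := hT.isUnit_one_sub_of_injective_s3 hinj
  exact ⟨ContinuousLinearMap.isUnit_iff_bijective.mp hunit, L, hleft,
    mul_eq_one_of_isUnit_of_mul_eq_one hunit hleft, rfl⟩
end

section
/- Let X be a real Banach space and let (A_k)_{k∈ℕ} be a sequence of bounded linear operators on X that is collectively compact, i.e., the set {A_k x : k ∈ ℕ, x ∈ X, ‖x‖ ≤ 1} is relatively compact in X. Let A be a bounded linear operator on X such that A_k x → A x for every x ∈ X. Then ‖(A_k − A) ∘ A_k‖ → 0 in operator norm as k → ∞. -/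
private lemma opnorm_le_of_unit
    {X : Type*} [NormedAddCommGroup X] [NormedSpace ℝ X]
    {f : X →L[ℝ] X} {c : ℝ} (hc : 0 ≤ c) (h : ∀ x : X, ‖x‖ ≤ 1 → ‖f x‖ ≤ c) :
    ‖f‖ ≤ c := by
  refine ContinuousLinearMap.opNorm_le_bound _ hc ?_
  intro x
  by_cases hx : x = 0
  · simp [hx]
  · have hxn : 0 < ‖x‖ := norm_pos_iff.mpr hx
    set u : X := ‖x‖⁻¹ • x with hu
    have hun : ‖u‖ ≤ 1 := by
      rw [hu, norm_smul, norm_inv, norm_norm, inv_mul_cancel₀ hxn.ne']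
    have hfx : f x = ‖x‖ • f u := by
      rw [hu, map_smul, smul_smul, mul_inv_cancel₀ hxn.ne', one_smul]
    calc ‖f x‖ = ‖x‖ * ‖f u‖ := by
          rw [hfx, norm_smul, Real.norm_of_nonneg hxn.le]
      _ ≤ ‖x‖ * c := by gcongr; exact h u hun
      _ = c * ‖x‖ := mul_comm _ _

/-- Let `X` be a real Banach space and `(A_k)` a collectively compact sequence
of bounded linear operators on `X`, i.e. `{A_k x : k ∈ ℕ, ‖x‖ ≤ 1}` is relatively compact.
Let `A` be a bounded linear operator on `X` with `A_k x → A x` for every `x`.  Then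
`‖(A_k − A) ∘ A_k‖ → 0` in operator norm. -/
theorem stmt_5
    {X : Type*} [NormedAddCommGroup X] [NormedSpace ℝ X] [CompleteSpace X]
    (A : ℕ → X →L[ℝ] X)
    (hcc : IsCompact (closure {y : X | ∃ k : ℕ, ∃ x : X, ‖x‖ ≤ 1 ∧ y = A k x}))
    (A₀ : X →L[ℝ] X)
    (hconv : ∀ x : X, Filter.Tendsto (fun k => A k x) Filter.atTop (nhds (A₀ x))) :
    Filter.Tendsto (fun k => ‖(A k - A₀) * A k‖) Filter.atTop (nhds 0) := by
  set S : Set X := {y : X | ∃ k : ℕ, ∃ x : X, ‖x‖ ≤ 1 ∧ y = A k x} with hS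
  set K : Set X := closure S with hK
  have hSK : S ⊆ K := subset_closure
  obtain ⟨C, hC⟩ := (isBounded_iff_forall_norm_le.mp hcc.isBounded)
  have hC0 : 0 ≤ C := by
    have h0 : (A 0 (0 : X)) ∈ K := hSK ⟨0, 0, by simp, rfl⟩
    exact le_trans (norm_nonneg _) (hC _ h0)
  have hAk : ∀ k, ‖A k‖ ≤ C := by
    intro k
    refine opnorm_le_of_unit hC0 fun x hx => ?_
    exact hC _ (hSK ⟨k, x, hx, rfl⟩)
  -- a uniform bound on ‖A k - A₀‖
  obtain ⟨D, hD0, hDbd⟩ : ∃ D : ℝ, 0 < D ∧ ∀ k, ‖A k - A₀‖ ≤ D := by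
    refine ⟨C + ‖A₀‖ + 1, by positivity, fun k => ?_⟩
    calc ‖A k - A₀‖ ≤ ‖A k‖ + ‖A₀‖ := norm_sub_le _ _
      _ ≤ C + ‖A₀‖ + 1 := by linarith [hAk k]
  rw [Metric.tendsto_atTop]
  intro ε hε
  obtain ⟨δ, hδ0, hDδ⟩ : ∃ δ : ℝ, 0 < δ ∧ D * δ ≤ ε / 4 := by
    refine ⟨ε / (4 * D), by positivity, le_of_eq ?_⟩
    field_simp
  -- finite δ-net of K
  have hcov : K ⊆ ⋃ y ∈ K, Metric.ball y δ := by
    intro y hy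
    exact Set.mem_biUnion hy (Metric.mem_ball_self hδ0)
  obtain ⟨t, htK, htfin, htcov⟩ :=
    hcc.elim_finite_subcover_image (fun y _ => Metric.isOpen_ball) hcov
  -- eventual smallness on the net
  have hev : ∀ᶠ k in Filter.atTop, ∀ y ∈ t, ‖A k y - A₀ y‖ < ε / 4 := by
    rw [Filter.eventually_all_finite htfin]
    intro y _
    have h1 := (hconv y).sub_const (A₀ y)
    rw [sub_self] at h1
    have h2 := (h1.norm).eventually
      (gt_mem_nhds (show ε / 4 > ‖(0:X)‖ by simpa using by positivity))
    simpa using h2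
  obtain ⟨N, hN⟩ := Filter.eventually_atTop.mp hev
  refine ⟨N, fun k hk => ?_⟩
  have key : ‖(A k - A₀) * A k‖ ≤ ε / 2 := by
    refine opnorm_le_of_unit (by positivity) fun x hx => ?_
    have hmem : A k x ∈ K := hSK ⟨k, x, hx, rfl⟩
    obtain ⟨y, hyt, hyb⟩ := Set.mem_iUnion₂.mp (htcov hmem)
    have hdist : ‖A k x - y‖ < δ := by
      rw [← dist_eq_norm]; exact hyb
    have hnorm1 : ‖(A k - A₀) (A k x - y)‖ ≤ D * δ := by
      calc ‖(A k - A₀) (A k x - y)‖ ≤ ‖A k - A₀‖ * ‖A k x - y‖ :=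
            ContinuousLinearMap.le_opNorm _ _
        _ ≤ D * δ := mul_le_mul (hDbd k) hdist.le (norm_nonneg _) hD0.le
    have hnorm2 : ‖(A k - A₀) y‖ < ε / 4 := by
      have := hN k hk y hyt
      simpa using this
    have heq : (A k - A₀) (A k x) = (A k - A₀) (A k x - y) + (A k - A₀) y := by
      rw [← map_add]
      congr 1
      abel
    calc ‖((A k - A₀) * A k) x‖ = ‖(A k - A₀) (A k x)‖ := rfl
      _ = ‖(A k - A₀) (A k x - y) + (A k - A₀) y‖ := by rw [heq]
      _ ≤ ‖(A k - A₀) (A k x - y)‖ + ‖(A k - A₀) y‖ := norm_add_le _ _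
      _ ≤ ε / 2 := by linarith
  rw [Real.dist_eq, sub_zero, abs_of_nonneg (norm_nonneg _)]
  linarith
end

section
/- Let ν ∈ (−1,0) be a real number and let ℓ be a natural number. Then ∫_{−1}^{1} (1−t)^{ν/2} · ((d/dt)^{ℓ} (1−t²)^{ℓ})(t) dt = (−1)^{ℓ} · (−ν/2)_{ℓ} · ∫_{−1}^{1} (1−t)^{ν/2}·(1+t)^{ℓ} dt, where (d/dt)^{ℓ} (1−t²)^{ℓ} denotes the ℓ-th derivative of the polynomial t ↦ (1−t²)^{ℓ}. -/
/-!
Write `μ = ν / 2`. The `i`-th derivative of `(1 - t) ^ ℓ * (1 + t) ^ ℓ` is `(1 - t) ^ (ℓ - i) * Qᵢ(t)`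
with `Qᵢ₊₁ = (i - ℓ) Qᵢ + (1 - t) Qᵢ'`, and `Qᵢ(-1) = 0` for `i < ℓ` because `-1` is a root of
order `ℓ`. Integrating the derivative of `(1 - t) ^ (μ + 1) * Qᵢ(t)` over `[-1, 1]` gives zero
(the boundary terms vanish since `μ + 1 > 0`), so each step multiplies `∫ (1 - t) ^ μ Qᵢ` by
`μ + 1 + i - ℓ`. The product of these factors is `∏_{j < ℓ} (μ - j) = (-1) ^ ℓ (-μ)_ℓ`.
-/

open Polynomial MeasureTheory Set

theorem Real.Gamma_add_nat_div_Gamma_eq {n : ℕ} (x : ℝ) (hx : ∀ k : ℕ, x ≠ -k) :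
    Real.Gamma (x + n) / Real.Gamma x = (ascPochhammer ℝ n).eval x := by
  apply Complex.ofReal_injective
  have hx' : ∀ k : ℕ, (x : ℂ) ≠ -k := fun k h => hx k (by exact_mod_cast h)
  rw [Complex.ofReal_div, ← Complex.Gamma_ofReal, ← Complex.Gamma_ofReal, Complex.ofReal_add,
    Complex.ofReal_natCast, Complex.Gamma_add_nat_div_Gamma_eq _ hx', ← ascPochhammer_map
    Complex.ofRealHom, eval_map]
  exact eval₂_at_apply Complex.ofRealHom x

theorem iteratedDeriv_eval_polynomial {𝕜 : Type*} [NontriviallyNormedField 𝕜] (p : 𝕜[X]) (n : ℕ) :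
    iteratedDeriv n (fun x => p.eval x) = fun x => (derivative^[n] p).eval x := by
  induction n with
  | zero => simp
  | succ n ih =>
    rw [iteratedDeriv_succ, ih, Function.iterate_succ_apply']
    exact funext fun x => Polynomial.deriv _

theorem prod_range_add_one_add_sub_eq_descPochhammer {R : Type*} [CommRing R] (r : R) (n : ℕ) :
    ∏ j ∈ Finset.range n, (r + 1 + j - n) = (descPochhammer R n).eval r := by
  rw [descPochhammer_eval_eq_prod_range, ← Finset.prod_range_reflect]
  refine Finset.prod_congr rfl fun j hj => ?_
  rw [Finset.mem_range] at hj
  rw [Nat.cast_sub (by omega), Nat.cast_sub (by omega)]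
  push_cast
  ring

section ReducedDeriv

variable {R : Type*} [CommRing R] (ℓ : ℕ) (p : R[X])

noncomputable def reducedDeriv : ℕ → R[X]
  | 0 => p
  | i + 1 => C ((i : R) - ℓ) * reducedDeriv i + (1 - X) * derivative (reducedDeriv i)

theorem one_sub_X_pow_mul_reducedDeriv {i : ℕ} (hi : i ≤ ℓ) :
    (1 - X) ^ (ℓ - i) * reducedDeriv ℓ p i = derivative^[i] ((1 - X) ^ ℓ * p) := by
  induction i with
  | zero => rfl
  | succ i ih =>
    obtain ⟨k, rfl⟩ : ∃ k, ℓ = i + k + 1 := ⟨ℓ - (i + 1), by omega⟩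
    rw [Function.iterate_succ_apply', ← ih (by omega), show i + k + 1 - i = k + 1 by omega,
      show i + k + 1 - (i + 1) = k by omega, reducedDeriv]
    simp only [derivative_mul, derivative_pow, derivative_sub, derivative_one, derivative_X]
    push_cast
    simp only [map_sub, map_add, map_natCast]
    ring

theorem reducedDeriv_eval_neg_one {K : Type*} [Field K] [CharZero K] {ℓ i : ℕ} (hi : i < ℓ) :
    (reducedDeriv ℓ ((1 + X : K[X]) ^ ℓ) i).eval (-1) = 0 := by
  have hdvd : (1 + X) ^ (ℓ - i) ∣ derivative^[i] ((1 - X) ^ ℓ * (1 + X : K[X]) ^ ℓ) :=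
    pow_sub_dvd_iterate_derivative_of_pow_dvd i (dvd_mul_left _ _)
  rw [← one_sub_X_pow_mul_reducedDeriv ℓ _ hi.le] at hdvd
  obtain ⟨q, hq⟩ := hdvd
  have := congrArg (eval (-1 : K)) hq
  simp only [eval_mul, eval_pow, eval_sub, eval_add, eval_one, eval_X, add_neg_cancel,
    zero_pow (Nat.sub_ne_zero_of_lt hi), zero_mul] at this
  simpa [sub_neg_eq_add, one_add_one_eq_two] using this

end ReducedDeriv

section WeightedIntegral

variable {μ : ℝ} (hμ : -1 < μ)
include hμ

theorem intervalIntegrable_one_sub_rpow_mul_eval (p : ℝ[X]) :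
    IntervalIntegrable (fun t => (1 - t) ^ μ * p.eval t) volume (-1) 1 := by
  have hweight : IntervalIntegrable (fun t : ℝ => (1 - t) ^ μ) volume (-1) 1 := by
    have := (intervalIntegral.intervalIntegrable_rpow' (a := 0) (b := 2) hμ).comp_sub_left 1
    norm_num at this
    exact this.symm
  exact hweight.mul_continuousOn p.continuous.continuousOn

theorem integral_one_sub_rpow_mul_eval_one_sub_mul_derivative {p : ℝ[X]} (hp : p.eval (-1) = 0) :
    ∫ t in (-1)..1, (1 - t) ^ μ * ((1 - X) * derivative p).eval t =
      (μ + 1) * ∫ t in (-1)..1, (1 - t) ^ μ * p.eval t := by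
  set F : ℝ → ℝ := fun t => (1 - t) ^ (μ + 1) * p.eval t
  have hF_cont : ContinuousOn F (Icc (-1) 1) :=
    ((continuousOn_const.sub continuousOn_id).rpow_const fun _ _ => Or.inr (by linarith)).mul
      p.continuous.continuousOn
  have hF_deriv : ∀ t ∈ Ioo (-1 : ℝ) 1, HasDerivAt F
      ((1 - t) ^ μ * ((1 - X) * derivative p).eval t - (μ + 1) * ((1 - t) ^ μ * p.eval t)) t := by
    rintro t ⟨-, ht⟩
    have hpos : 0 < 1 - t := by linarith
    have hweight : HasDerivAt (fun s => (1 - s) ^ (μ + 1)) (-1 * (μ + 1) * (1 - t) ^ μ) t := by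
      simpa using ((hasDerivAt_id' t).const_sub 1).rpow_const (p := μ + 1) (Or.inl hpos.ne')
    refine (hweight.mul (p.hasDerivAt t)).congr_deriv ?_
    simp only [eval_mul, eval_sub, eval_one, eval_X, Real.rpow_add_one hpos.ne']
    ring
  have hF_int := intervalIntegral.integral_eq_sub_of_hasDerivAt_of_le (by norm_num) hF_cont
    hF_deriv ((intervalIntegrable_one_sub_rpow_mul_eval hμ _).sub
      ((intervalIntegrable_one_sub_rpow_mul_eval hμ p).const_mul _))
  rw [intervalIntegral.integral_sub (intervalIntegrable_one_sub_rpow_mul_eval hμ _)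
    ((intervalIntegrable_one_sub_rpow_mul_eval hμ p).const_mul _),
    intervalIntegral.integral_const_mul] at hF_int
  simp only [F, hp, mul_zero, sub_self, Real.zero_rpow (by linarith : μ + 1 ≠ 0), zero_mul] at hF_int
  linarith

theorem integral_one_sub_rpow_mul_reducedDeriv_succ {ℓ i : ℕ} {p : ℝ[X]}
    (hp : (reducedDeriv ℓ p i).eval (-1) = 0) :
    ∫ t in (-1)..1, (1 - t) ^ μ * (reducedDeriv ℓ p (i + 1)).eval t =
      (μ + 1 + i - ℓ) * ∫ t in (-1)..1, (1 - t) ^ μ * (reducedDeriv ℓ p i).eval t := by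
  have hsplit : (fun t => (1 - t) ^ μ * (reducedDeriv ℓ p (i + 1)).eval t) = fun t =>
      ((i : ℝ) - ℓ) * ((1 - t) ^ μ * (reducedDeriv ℓ p i).eval t) +
        (1 - t) ^ μ * ((1 - X) * derivative (reducedDeriv ℓ p i)).eval t := by
    funext t
    rw [reducedDeriv, eval_add, eval_mul, eval_C]
    ring
  rw [hsplit, intervalIntegral.integral_add
      ((intervalIntegrable_one_sub_rpow_mul_eval hμ _).const_mul _)
      (intervalIntegrable_one_sub_rpow_mul_eval hμ _),
    intervalIntegral.integral_const_mul,
    integral_one_sub_rpow_mul_eval_one_sub_mul_derivative hμ hp]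
  ring

theorem integral_one_sub_rpow_mul_reducedDeriv {ℓ i : ℕ} {p : ℝ[X]}
    (hp : ∀ j < i, (reducedDeriv ℓ p j).eval (-1) = 0) :
    ∫ t in (-1)..1, (1 - t) ^ μ * (reducedDeriv ℓ p i).eval t =
      (∏ j ∈ Finset.range i, (μ + 1 + j - ℓ)) * ∫ t in (-1)..1, (1 - t) ^ μ * p.eval t := by
  induction i with
  | zero => simp [reducedDeriv]
  | succ i ih =>
    rw [integral_one_sub_rpow_mul_reducedDeriv_succ hμ (hp i i.lt_succ_self),
      ih fun j hj => hp j (hj.trans i.lt_succ_self), Finset.prod_range_succ]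
    ring

end WeightedIntegral

/-- For `ν ∈ (−1,0)` and `ℓ ∈ ℕ`,
`∫_{−1}^{1} (1−t)^{ν/2} · ((d/dt)^ℓ (1−t²)^ℓ)(t) dt
  = (−1)^ℓ · (−ν/2)_ℓ · ∫_{−1}^{1} (1−t)^{ν/2}·(1+t)^ℓ dt`,
where `(x)_ℓ = Γ(x+ℓ)/Γ(x)` is the Pochhammer symbol. -/
theorem stmt_9 (ν : ℝ) (hν : ν ∈ Set.Ioo (-1 : ℝ) 0) (ℓ : ℕ) :
    ∫ t in Set.Ioo (-1 : ℝ) 1,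
        (1 - t) ^ (ν / 2) * iteratedDeriv ℓ (fun s : ℝ => (1 - s ^ 2) ^ ℓ) t =
      (-1 : ℝ) ^ ℓ * (Real.Gamma (-ν / 2 + ℓ) / Real.Gamma (-ν / 2)) *
        ∫ t in Set.Ioo (-1 : ℝ) 1, (1 - t) ^ (ν / 2) * (1 + t) ^ ℓ := by
  have hμ : -1 < ν / 2 := by linarith [hν.1]
  have hGamma : ∀ k : ℕ, -(ν / 2) ≠ -k := fun k => by linarith [hν.2, k.cast_nonneg (α := ℝ)]
  have hderiv : iteratedDeriv ℓ (fun s : ℝ => (1 - s ^ 2) ^ ℓ) =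
      fun t => (reducedDeriv ℓ ((1 + X) ^ ℓ) ℓ).eval t := by
    have hpoly : (fun s : ℝ => (1 - s ^ 2) ^ ℓ) =
        fun s => ((1 - X) ^ ℓ * (1 + X : ℝ[X]) ^ ℓ).eval s := by
      funext s
      rw [eval_mul, eval_pow, eval_pow, ← mul_pow]
      simp only [eval_sub, eval_add, eval_one, eval_X]
      ring
    rw [hpoly, iteratedDeriv_eval_polynomial, ← one_sub_X_pow_mul_reducedDeriv ℓ _ le_rfl,
      Nat.sub_self, pow_zero, one_mul]
  have hIoo (f : ℝ → ℝ) : ∫ t in Ioo (-1 : ℝ) 1, f t = ∫ t in (-1)..1, f t := by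
    rw [intervalIntegral.integral_of_le (by norm_num), integral_Ioc_eq_integral_Ioo]
  rw [hIoo, hIoo, hderiv,
    integral_one_sub_rpow_mul_reducedDeriv hμ fun j hj => reducedDeriv_eval_neg_one hj,
    prod_range_add_one_add_sub_eq_descPochhammer, neg_div,
    Real.Gamma_add_nat_div_Gamma_eq _ hGamma, ascPochhammer_eval_neg_eq_descPochhammer,
    ← mul_assoc, ← pow_add, Even.neg_one_pow ⟨ℓ, rfl⟩, one_mul]
  simp only [eval_pow, eval_add, eval_one, eval_X]
end
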